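/- Let X be a compact metric space, q > 1, p ≥ 1, and consider the half-cylinder X ×_q [0,∞) with metric d_q((x₁,t₁),(x₂,t₂)) = (d(x₁,x₂)^q + |t₁-t₂|^q)^(1/q). For μ ∈ P_p(X ×_q [0,∞)) let (T₀)_#μ be the pushforward of μ under projection to the base (x,t) ↦ (x,0). Then for every measure ν' supported on X × {0}, one has W_p(μ, ν') ≥ W_p(μ, (T₀)_#μ), with equality only if ν' = (T₀)_#μ. -/

import Mathlib

open MeasureTheory
open scoped NNReal

/-- The `q`-product distance on `X × Y`. -/
noncomputable def dq {X Y : Type*} [MetricSpace X] [MetricSpace Y] (q : ℝ) (a b : X × Y) : ℝ :=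
  (dist a.1 b.1 ^ q + dist a.2 b.2 ^ q) ^ (1 / q)

/-- The `p`-Wasserstein distance associated to a cost (distance) function `d`. -/
noncomputable def Wp {Z : Type*} [MeasurableSpace Z] (d : Z → Z → ℝ) (p : ℝ)
    (μ ν : Measure Z) : ℝ :=
  sInf {c : ℝ | ∃ γ : Measure (Z × Z), IsProbabilityMeasure γ ∧
    γ.map Prod.fst = μ ∧ γ.map Prod.snd = ν ∧
    c = (∫ z, d z.1 z.2 ^ p ∂γ) ^ (1 / p)}

/-!
A coupling of `μ` with a measure living on the base moves each point `(x, t)` to a point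
`(y, 0)` at `d_q`-distance at least `t`, so its cost is at least `∫ t^p dμ`, and the vertical
coupling `z ↦ (z, T₀ z)` attains this bound.

For the equality case, fix `ε > 0` and a height `M`. Pairs with `d(x, y) ≥ ε` and `t ≤ M` cost
at least `t^p + c` for some `c > 0` (a minimum over the compact interval `[0, M]`), so a coupling
whose cost is within `c ε / 2` of `∫ t^p dμ` gives them mass at most `ε / 2`, while pairs with
`t > M` have small `μ`-mass once `M` is large. Pushing such a coupling forward by `T₀ × id`
yields couplings of `(T₀)_# μ` and `ν'` concentrated near the diagonal, so the Lévy–Prokhorov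
distance between these two measures vanishes.
-/

open Filter Topology Set
open scoped ENNReal

lemma exists_pos_add_le_rpow_add_rpow {q p δ : ℝ} (hq : 0 < q) (hp : 0 < p) (hδ : 0 < δ)
    (M : ℝ) : ∃ c > 0, ∀ a t, δ ≤ a → 0 ≤ t → t ≤ M → t ^ p + c ≤ (a ^ q + t ^ q) ^ (p / q) := by
  set f : ℝ → ℝ := fun t => (δ ^ q + t ^ q) ^ (p / q) - t ^ p
  have hf_pos : ∀ t, 0 ≤ t → 0 < f t := fun t ht => by
    have : (t ^ q) ^ (p / q) < (δ ^ q + t ^ q) ^ (p / q) :=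
      Real.rpow_lt_rpow (by positivity) (lt_add_of_pos_left _ (by positivity)) (by positivity)
    rw [← Real.rpow_mul ht, mul_div_cancel₀ _ hq.ne'] at this
    exact sub_pos.2 this
  have hf_cont : Continuous f := by fun_prop (disch := positivity)
  obtain ⟨t₀, ht₀, hmin⟩ := isCompact_Icc.exists_isMinOn (nonempty_Icc.2 (le_max_left 0 M))
    hf_cont.continuousOn
  refine ⟨f t₀, hf_pos t₀ ht₀.1, fun a t ha ht htM => ?_⟩
  have hmin_t : f t₀ ≤ f t := hmin ⟨ht, htM.trans (le_max_right _ _)⟩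
  have hmono : (δ ^ q + t ^ q) ^ (p / q) ≤ (a ^ q + t ^ q) ^ (p / q) := by gcongr
  simp only [f] at hmin_t
  linarith

section Dq

variable {X Y : Type*} [MetricSpace X] [MetricSpace Y] {q : ℝ}

lemma dq_nonneg (a b : X × Y) : 0 ≤ dq q a b := by unfold dq; positivity

lemma dq_rpow (p : ℝ) (a b : X × Y) :
    dq q a b ^ p = (dist a.1 b.1 ^ q + dist a.2 b.2 ^ q) ^ (p / q) := by
  rw [dq, ← Real.rpow_mul (by positivity), one_div_mul_eq_div]

lemma dist_snd_le_dq (hq : 0 < q) (a b : X × Y) : dist a.2 b.2 ≤ dq q a b := by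
  calc dist a.2 b.2 = (dist a.2 b.2 ^ q) ^ (1 / q) := by
        rw [← Real.rpow_mul dist_nonneg, mul_one_div_cancel hq.ne', Real.rpow_one]
    _ ≤ dq q a b := by unfold dq; gcongr; exact le_add_of_nonneg_left (by positivity)

lemma dq_of_fst_eq (hq : q ≠ 0) {a b : X × Y} (h : a.1 = b.1) : dq q a b = dist a.2 b.2 := by
  rw [dq, h, dist_self, Real.zero_rpow hq, zero_add, ← Real.rpow_mul dist_nonneg,
    mul_one_div_cancel hq, Real.rpow_one]

lemma dq_le_dist_add_dist (hq : 1 ≤ q) (a b : X × Y) : dq q a b ≤ dist a.1 b.1 + dist a.2 b.2 :=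
  Real.rpow_add_rpow_le_add dist_nonneg dist_nonneg hq

lemma continuous_dq (hq : 0 ≤ q) : Continuous fun ω : (X × Y) × (X × Y) => dq q ω.1 ω.2 := by
  unfold dq; fun_prop (disch := positivity)

end Dq

section Wasserstein

variable {Z : Type*} [MeasurableSpace Z] {d : Z → Z → ℝ} {p : ℝ} {μ ν : Measure Z}

lemma integral_comp_fst_of_map_fst {W : Type*} [MeasurableSpace W] {γ : Measure (Z × W)}
    {f : Z → ℝ} (hf : Measurable f) (hfst : γ.map Prod.fst = μ) :
    ∫ ω, f ω.1 ∂γ = ∫ z, f z ∂μ := by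
  rw [← hfst, integral_map measurable_fst.aemeasurable hf.aestronglyMeasurable]

lemma Wp_le_of_coupling (hd : ∀ a b, 0 ≤ d a b) {γ : Measure (Z × Z)} [IsProbabilityMeasure γ]
    (hfst : γ.map Prod.fst = μ) (hsnd : γ.map Prod.snd = ν) :
    Wp d p μ ν ≤ (∫ z, d z.1 z.2 ^ p ∂γ) ^ (1 / p) := by
  refine csInf_le ⟨0, ?_⟩ ⟨γ, inferInstance, hfst, hsnd, rfl⟩
  rintro _ ⟨γ', -, -, -, rfl⟩
  exact Real.rpow_nonneg (integral_nonneg fun z => Real.rpow_nonneg (hd _ _) _) _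

variable [IsProbabilityMeasure μ] [IsProbabilityMeasure ν]

lemma nonempty_coupling_costs :
    {c : ℝ | ∃ γ : Measure (Z × Z), IsProbabilityMeasure γ ∧
      γ.map Prod.fst = μ ∧ γ.map Prod.snd = ν ∧
      c = (∫ z, d z.1 z.2 ^ p ∂γ) ^ (1 / p)}.Nonempty :=
  ⟨_, μ.prod ν, inferInstance, by simp, by simp, rfl⟩

lemma le_Wp_of_forall_coupling {c : ℝ}
    (h : ∀ γ : Measure (Z × Z), IsProbabilityMeasure γ → γ.map Prod.fst = μ →
      γ.map Prod.snd = ν → c ≤ (∫ z, d z.1 z.2 ^ p ∂γ) ^ (1 / p)) :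
    c ≤ Wp d p μ ν := by
  refine le_csInf nonempty_coupling_costs ?_
  rintro _ ⟨γ, hγ, hfst, hsnd, rfl⟩
  exact h γ hγ hfst hsnd

lemma exists_coupling_lt_of_Wp_lt {c : ℝ} (h : Wp d p μ ν < c) :
    ∃ γ : Measure (Z × Z), IsProbabilityMeasure γ ∧ γ.map Prod.fst = μ ∧
      γ.map Prod.snd = ν ∧ (∫ z, d z.1 z.2 ^ p ∂γ) ^ (1 / p) < c := by
  obtain ⟨_, ⟨γ, hγ, hfst, hsnd, rfl⟩, hlt⟩ := exists_lt_of_csInf_lt nonempty_coupling_costs h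
  exact ⟨γ, hγ, hfst, hsnd, hlt⟩

end Wasserstein

section LevyProkhorov

variable {Ω : Type*} [MeasurableSpace Ω] [PseudoMetricSpace Ω] {μ ν : Measure Ω}
  [IsProbabilityMeasure μ] [IsProbabilityMeasure ν]

lemma levyProkhorovDist_le_of_coupling [OpensMeasurableSpace Ω] {γ : Measure (Ω × Ω)}
    (hfst : γ.map Prod.fst = μ) (hsnd : γ.map Prod.snd = ν) {δ : ℝ} (hδ : 0 ≤ δ)
    (hfar : γ {ω | δ ≤ dist ω.1 ω.2} ≤ ENNReal.ofReal δ) :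
    levyProkhorovDist μ ν ≤ δ := by
  refine levyProkhorovDist_le_of_forall_le μ ν hδ fun ε B hε hB => ?_
  have hcover : Prod.fst ⁻¹' B ⊆
      Prod.snd ⁻¹' Metric.thickening ε B ∪ {ω : Ω × Ω | δ ≤ dist ω.1 ω.2} := by
    intro ω hω
    by_cases hclose : δ ≤ dist ω.1 ω.2
    · exact Or.inr hclose
    · refine Or.inl (Metric.mem_thickening_iff.2 ⟨ω.1, hω, ?_⟩)
      rw [dist_comm]
      exact (not_le.1 hclose).trans hε
  calc μ B = γ (Prod.fst ⁻¹' B) := by rw [← hfst, Measure.map_apply measurable_fst hB]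
    _ ≤ γ (Prod.snd ⁻¹' Metric.thickening ε B) + γ {ω | δ ≤ dist ω.1 ω.2} :=
        (measure_mono hcover).trans (measure_union_le _ _)
    _ ≤ ν (Metric.thickening ε B) + ENNReal.ofReal ε := by
        rw [← hsnd, Measure.map_apply measurable_snd Metric.isOpen_thickening.measurableSet]
        gcongr
        exact hfar.trans (ENNReal.ofReal_le_ofReal hε.le)

lemma eq_of_forall_levyProkhorovDist_le [BorelSpace Ω] (h : ∀ ε > 0, levyProkhorovDist μ ν ≤ ε) :
    μ = ν := by
  have hLP := eq_of_forall_dist_le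
    (x := LevyProkhorov.ofMeasure (α := ProbabilityMeasure Ω) ⟨μ, ‹_›⟩)
    (y := LevyProkhorov.ofMeasure (α := ProbabilityMeasure Ω) ⟨ν, ‹_›⟩) h
  exact congrArg (fun P => (P.toMeasure : Measure Ω)) hLP

end LevyProkhorov

lemma exists_measure_lt_le {α : Type*} [MeasurableSpace α] (μ : Measure α) [IsFiniteMeasure μ]
    {f : α → ℝ≥0} (hf : Measurable f) {η : ℝ≥0∞} (hη : 0 < η) :
    ∃ M : ℝ≥0, μ {x | M < f x} ≤ η := by
  have hlim : Tendsto (fun M : ℝ≥0 => μ {x | M < f x}) atTop (𝓝 0) := by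
    have hempty : ⋂ M : ℝ≥0, {x | M < f x} = ∅ :=
      eq_empty_of_forall_notMem fun x hx => lt_irrefl (f x) (mem_iInter.1 hx (f x))
    simpa [hempty, Function.comp_def] using
      tendsto_measure_iInter_atTop (μ := μ) (s := fun M : ℝ≥0 => {x | M < f x})
      (fun M => (measurableSet_lt measurable_const hf).nullMeasurableSet)
      (fun M N hMN x hx => lt_of_le_of_lt hMN hx) ⟨0, measure_ne_top _ _⟩
  exact (hlim.eventually (ge_mem_nhds hη)).exists

section Base

variable {X : Type*} [MeasurableSpace X] {μ ν : Measure (X × ℝ≥0)}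

def toBase (z : X × ℝ≥0) : X × ℝ≥0 := (z.1, 0)

lemma measurable_toBase : Measurable (toBase : X × ℝ≥0 → X × ℝ≥0) :=
  measurable_fst.prodMk measurable_const

lemma ae_map_toBase_snd_eq_zero : ∀ᵐ z ∂(μ.map toBase), z.2 = 0 :=
  (ae_map_iff measurable_toBase.aemeasurable
    (measurableSet_eq_fun measurable_snd measurable_const)).2 (ae_of_all _ fun _ => rfl)

lemma ae_snd_snd_eq_zero {γ : Measure ((X × ℝ≥0) × (X × ℝ≥0))} (hsnd : γ.map Prod.snd = ν)
    (hν : ∀ᵐ z ∂ν, z.2 = 0) : ∀ᵐ ω ∂γ, ω.2.2 = 0 :=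
  ae_of_ae_map measurable_snd.aemeasurable (hsnd ▸ hν)

end Base

section HalfCylinder

variable {X : Type*} [MetricSpace X] {q p : ℝ}

lemma dq_rpow_of_snd_eq_zero (a b : X × ℝ≥0) (hb : b.2 = 0) :
    dq q a b ^ p = (dist a.1 b.1 ^ q + (a.2 : ℝ) ^ q) ^ (p / q) := by
  simp [dq_rpow, hb, NNReal.dist_eq]

lemma rpow_snd_le_dq_rpow (hq : 0 < q) (hp : 0 ≤ p) (a b : X × ℝ≥0) (hb : b.2 = 0) :
    (a.2 : ℝ) ^ p ≤ dq q a b ^ p := by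
  have := dist_snd_le_dq hq a b
  rw [hb, NNReal.dist_eq, NNReal.coe_zero, sub_zero, abs_of_nonneg a.2.coe_nonneg] at this
  gcongr

variable [MeasurableSpace X] [CompactSpace X] [BorelSpace X] {μ ν : Measure (X × ℝ≥0)}
  {γ : Measure ((X × ℝ≥0) × (X × ℝ≥0))}

lemma integrable_dq_rpow (hq : 1 ≤ q) (hp : 1 ≤ p) [IsFiniteMeasure γ]
    (hmom : Integrable (fun ω => (ω.1.2 : ℝ) ^ p) γ) (hγ : ∀ᵐ ω ∂γ, ω.2.2 = 0) :
    Integrable (fun ω => dq q ω.1 ω.2 ^ p) γ := by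
  set D : ℝ≥0 := ⟨Metric.diam (univ : Set X), Metric.diam_nonneg⟩
  refine ((integrable_const ((2 : ℝ) ^ (p - 1) * (D : ℝ) ^ p)).add
    (hmom.const_mul ((2 : ℝ) ^ (p - 1)))).mono'
    ((continuous_dq (by linarith)).rpow_const fun _ => Or.inr (by linarith)).aestronglyMeasurable ?_
  filter_upwards [hγ] with ω hω
  have hdist : dq q ω.1 ω.2 ≤ ((D + ω.1.2 : ℝ≥0) : ℝ) := by
    refine (dq_le_dist_add_dist hq _ _).trans ?_
    rw [hω, NNReal.coe_add]
    gcongr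
    · exact Metric.dist_le_diam_of_mem isCompact_univ.isBounded (mem_univ _) (mem_univ _)
    · simp [NNReal.dist_eq]
  have hconvex :
      ((D + ω.1.2 : ℝ≥0) : ℝ) ^ p ≤ (2 : ℝ) ^ (p - 1) * ((D : ℝ) ^ p + (ω.1.2 : ℝ) ^ p) := by
    exact_mod_cast NNReal.rpow_add_le_mul_rpow_add_rpow D ω.1.2 hp
  rw [Real.norm_of_nonneg (Real.rpow_nonneg (dq_nonneg _ _) _), Pi.add_apply, ← mul_add]
  exact (Real.rpow_le_rpow (dq_nonneg _ _) hdist (by linarith)).trans hconvex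

lemma integral_rpow_snd_le_integral_dq_rpow (hq : 1 ≤ q) (hp : 1 ≤ p) [IsFiniteMeasure γ]
    (hmom : Integrable (fun ω => (ω.1.2 : ℝ) ^ p) γ) (hγ : ∀ᵐ ω ∂γ, ω.2.2 = 0) :
    ∫ ω, (ω.1.2 : ℝ) ^ p ∂γ ≤ ∫ ω, dq q ω.1 ω.2 ^ p ∂γ := by
  refine integral_mono_ae hmom (integrable_dq_rpow hq hp hmom hγ) ?_
  filter_upwards [hγ] with ω hω
  exact rpow_snd_le_dq_rpow (by linarith) (by linarith) _ _ hω

lemma rpow_integral_le_Wp (hq : 1 ≤ q) (hp : 1 ≤ p) [IsProbabilityMeasure μ]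
    [IsProbabilityMeasure ν] (hmom : Integrable (fun z => (z.2 : ℝ) ^ p) μ)
    (hν : ∀ᵐ z ∂ν, z.2 = 0) :
    (∫ z, (z.2 : ℝ) ^ p ∂μ) ^ (1 / p) ≤ Wp (dq q) p μ ν := by
  refine le_Wp_of_forall_coupling fun γ _ hfst hsnd => ?_
  have hmomγ : Integrable (fun ω => (ω.1.2 : ℝ) ^ p) γ :=
    (hfst ▸ hmom).comp_measurable measurable_fst
  rw [← integral_comp_fst_of_map_fst (by fun_prop) hfst]
  exact Real.rpow_le_rpow (integral_nonneg fun ω => by positivity)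
    (integral_rpow_snd_le_integral_dq_rpow hq hp hmomγ (ae_snd_snd_eq_zero hsnd hν))
    (by positivity)

lemma Wp_map_toBase (hq : 1 ≤ q) (hp : 1 ≤ p) [IsProbabilityMeasure μ]
    (hmom : Integrable (fun z => (z.2 : ℝ) ^ p) μ) :
    Wp (dq q) p μ (μ.map toBase) = (∫ z, (z.2 : ℝ) ^ p ∂μ) ^ (1 / p) := by
  have : IsProbabilityMeasure (μ.map toBase) :=
    Measure.isProbabilityMeasure_map measurable_toBase.aemeasurable
  refine le_antisymm ?_ (rpow_integral_le_Wp hq hp hmom ae_map_toBase_snd_eq_zero)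
  have hgraph : Measurable fun z : X × ℝ≥0 => (z, toBase z) :=
    measurable_id.prodMk measurable_toBase
  have : IsProbabilityMeasure (μ.map fun z => (z, toBase z)) :=
    Measure.isProbabilityMeasure_map hgraph.aemeasurable
  have hcost : Measurable fun ω : (X × ℝ≥0) × (X × ℝ≥0) => dq q ω.1 ω.2 ^ p :=
    ((continuous_dq (by linarith)).rpow_const fun _ => Or.inr (by linarith)).measurable
  calc Wp (dq q) p μ (μ.map toBase)
      ≤ (∫ ω, dq q ω.1 ω.2 ^ p ∂(μ.map fun z => (z, toBase z))) ^ (1 / p) :=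
        Wp_le_of_coupling dq_nonneg
          (by rw [Measure.map_map measurable_fst hgraph]; exact Measure.map_id)
          (by rw [Measure.map_map measurable_snd hgraph]; rfl)
    _ = (∫ z, (z.2 : ℝ) ^ p ∂μ) ^ (1 / p) := by
        rw [integral_map hgraph.aemeasurable hcost.aestronglyMeasurable]
        congr with z
        dsimp only
        rw [dq_of_fst_eq (a := z) (b := toBase z) (by linarith) rfl]
        simp [toBase, NNReal.dist_eq]

lemma mul_measureReal_far_le (hq : 1 ≤ q) (hp : 1 ≤ p) [IsFiniteMeasure γ]
    (hmom : Integrable (fun ω => (ω.1.2 : ℝ) ^ p) γ) (hγ : ∀ᵐ ω ∂γ, ω.2.2 = 0) {c δ : ℝ}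
    {M : ℝ≥0} (hc : ∀ a t : ℝ, δ ≤ a → 0 ≤ t → t ≤ M → t ^ p + c ≤ (a ^ q + t ^ q) ^ (p / q)) :
    c * γ.real {ω | δ ≤ dist ω.1.1 ω.2.1 ∧ (ω.1.2 : ℝ) ≤ M} ≤
      ∫ ω, dq q ω.1 ω.2 ^ p ∂γ - ∫ ω, (ω.1.2 : ℝ) ^ p ∂γ := by
  set S := {ω : (X × ℝ≥0) × (X × ℝ≥0) | δ ≤ dist ω.1.1 ω.2.1 ∧ (ω.1.2 : ℝ) ≤ M}
  have hS : MeasurableSet S :=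
    (measurableSet_le measurable_const
      (continuous_fst.fst.dist continuous_snd.fst).measurable).inter
      (measurableSet_le measurable_fst.snd.coe_nnreal_real measurable_const)
  rw [← integral_sub (integrable_dq_rpow hq hp hmom hγ) hmom, mul_comm, ← smul_eq_mul,
    ← integral_indicator_const c hS]
  refine integral_mono_ae ((integrable_const c).indicator hS)
    ((integrable_dq_rpow hq hp hmom hγ).sub hmom) ?_
  filter_upwards [hγ] with ω hω
  by_cases hωS : ω ∈ S
  · rw [indicator_of_mem hωS, dq_rpow_of_snd_eq_zero _ _ hω]
    linarith [hc _ _ hωS.1 ω.1.2.coe_nonneg hωS.2]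
  · rw [indicator_of_notMem hωS]
    linarith [rpow_snd_le_dq_rpow (q := q) (by linarith) (by linarith) ω.1 ω.2 hω]

lemma exists_coupling_measure_far_le (hq : 1 < q) (hp : 1 ≤ p) [IsProbabilityMeasure μ]
    [IsProbabilityMeasure ν] (hmom : Integrable (fun z => (z.2 : ℝ) ^ p) μ)
    (hν : ∀ᵐ z ∂ν, z.2 = 0) (heq : Wp (dq q) p μ ν = (∫ z, (z.2 : ℝ) ^ p ∂μ) ^ (1 / p))
    {ε : ℝ} (hε : 0 < ε) :
    ∃ γ : Measure ((X × ℝ≥0) × (X × ℝ≥0)), IsProbabilityMeasure γ ∧ γ.map Prod.fst = μ ∧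
      γ.map Prod.snd = ν ∧ γ {ω | ε ≤ dist ω.1.1 ω.2.1} ≤ ENNReal.ofReal ε := by
  set I := ∫ z, (z.2 : ℝ) ^ p ∂μ
  have hI : 0 ≤ I := integral_nonneg fun z => by positivity
  obtain ⟨M, hM⟩ := exists_measure_lt_le μ measurable_snd (ENNReal.ofReal_pos.2 (half_pos hε))
  obtain ⟨c, hc0, hc⟩ :=
    exists_pos_add_le_rpow_add_rpow (q := q) (p := p) (by linarith) (by linarith) hε M
  have hlt : Wp (dq q) p μ ν < (I + c * (ε / 2)) ^ (1 / p) := by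
    rw [heq]
    exact Real.rpow_lt_rpow hI (by linarith [mul_pos hc0 (half_pos hε)]) (by positivity)
  obtain ⟨γ, hγ, hfst, hsnd, hcost⟩ := exists_coupling_lt_of_Wp_lt hlt
  refine ⟨γ, hγ, hfst, hsnd, ?_⟩
  have hcost' : ∫ ω, dq q ω.1 ω.2 ^ p ∂γ < I + c * (ε / 2) :=
    (Real.rpow_lt_rpow_iff (integral_nonneg fun ω => Real.rpow_nonneg (dq_nonneg _ _) _)
      (by linarith [mul_pos hc0 (half_pos hε)]) (by positivity)).1 hcost
  have hmomγ : Integrable (fun ω => (ω.1.2 : ℝ) ^ p) γ :=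
    (hfst ▸ hmom).comp_measurable measurable_fst
  have hIγ : ∫ ω, (ω.1.2 : ℝ) ^ p ∂γ = I := integral_comp_fst_of_map_fst
    (f := fun z : X × ℝ≥0 => (z.2 : ℝ) ^ p) (by fun_prop) hfst
  set S := {ω : (X × ℝ≥0) × (X × ℝ≥0) | ε ≤ dist ω.1.1 ω.2.1 ∧ (ω.1.2 : ℝ) ≤ M}
  have hnear : γ S ≤ ENNReal.ofReal (ε / 2) := by
    rw [ENNReal.le_ofReal_iff_toReal_le (measure_ne_top _ _) (by positivity)]
    have hgap : c * (γ S).toReal ≤ ∫ ω, dq q ω.1 ω.2 ^ p ∂γ - I :=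
      hIγ ▸ mul_measureReal_far_le hq.le hp hmomγ (ae_snd_snd_eq_zero hsnd hν) hc
    exact (mul_le_mul_iff_right₀ hc0).1 (by linarith)
  have htail : γ (Prod.fst ⁻¹' {z | M < z.2}) = μ {z | M < z.2} := by
    rw [← hfst, Measure.map_apply measurable_fst (measurableSet_lt measurable_const measurable_snd)]
  calc γ {ω | ε ≤ dist ω.1.1 ω.2.1} ≤ γ S + γ (Prod.fst ⁻¹' {z | M < z.2}) := by
        refine (measure_mono fun ω hω => ?_).trans (measure_union_le _ _)
        by_cases htM : (ω.1.2 : ℝ) ≤ M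
        · exact Or.inl ⟨hω, htM⟩
        · exact Or.inr (not_le.1 htM)
    _ ≤ ENNReal.ofReal (ε / 2) + ENNReal.ofReal (ε / 2) := add_le_add hnear (htail ▸ hM)
    _ = ENNReal.ofReal ε := by rw [← ENNReal.ofReal_add (by positivity) (by positivity), add_halves]

lemma map_toBase_eq_of_Wp_eq (hq : 1 < q) (hp : 1 ≤ p) [IsProbabilityMeasure μ]
    [IsProbabilityMeasure ν] (hmom : Integrable (fun z => (z.2 : ℝ) ^ p) μ)
    (hν : ∀ᵐ z ∂ν, z.2 = 0) (heq : Wp (dq q) p μ ν = (∫ z, (z.2 : ℝ) ^ p ∂μ) ^ (1 / p)) :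
    μ.map toBase = ν := by
  have : IsProbabilityMeasure (μ.map toBase) :=
    Measure.isProbabilityMeasure_map measurable_toBase.aemeasurable
  refine eq_of_forall_levyProkhorovDist_le fun ε hε => ?_
  obtain ⟨γ, hγ, hfst, hsnd, hfar⟩ := exists_coupling_measure_far_le hq hp hmom hν heq hε
  set e : (X × ℝ≥0) × (X × ℝ≥0) → (X × ℝ≥0) × (X × ℝ≥0) := fun ω => (toBase ω.1, ω.2)
  have he : Measurable e := (measurable_toBase.comp measurable_fst).prodMk measurable_snd
  refine levyProkhorovDist_le_of_coupling (γ := γ.map e) ?_ ?_ hε.le ?_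
  · rw [Measure.map_map measurable_fst he, ← hfst, Measure.map_map measurable_toBase measurable_fst]
    rfl
  · rw [Measure.map_map measurable_snd he]
    exact hsnd
  · rw [Measure.map_apply he (isClosed_le continuous_const continuous_dist).measurableSet]
    refine (measure_mono_ae ?_).trans hfar
    filter_upwards [ae_snd_snd_eq_zero hsnd hν] with ω hω hfarω
    have hdist : dist (toBase ω.1) ω.2 = dist ω.1.1 ω.2.1 := by simp [toBase, Prod.dist_eq, hω]
    exact (hdist ▸ hfarω : ε ≤ dist ω.1.1 ω.2.1)

end HalfCylinder

/-- On the half-cylinder `X ×_q [0,∞)`, for `μ ∈ P_p` and any probability measure `ν'`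
supported on the base `X × {0}`, one has `W_p(μ, ν') ≥ W_p(μ, (T₀)_#μ)` where
`T₀(x,t) = (x,0)`, with equality only if `ν' = (T₀)_#μ`. -/
theorem stmt_12 {X : Type*} [MetricSpace X] [CompactSpace X]
    [MeasurableSpace X] [BorelSpace X]
    (q p : ℝ) (hq : 1 < q) (hp : 1 ≤ p)
    (μ : Measure (X × ℝ≥0)) [IsProbabilityMeasure μ]
    (hmom : Integrable (fun z : X × ℝ≥0 => (z.2 : ℝ) ^ p) μ)
    (ν' : Measure (X × ℝ≥0)) [IsProbabilityMeasure ν']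
    (hν' : ν' {z : X × ℝ≥0 | z.2 ≠ 0} = 0) :
    Wp (dq q) p μ (μ.map (fun z : X × ℝ≥0 => (z.1, (0 : ℝ≥0)))) ≤ Wp (dq q) p μ ν' ∧
    (Wp (dq q) p μ ν' = Wp (dq q) p μ (μ.map (fun z : X × ℝ≥0 => (z.1, (0 : ℝ≥0)))) →
      ν' = μ.map (fun z : X × ℝ≥0 => (z.1, (0 : ℝ≥0)))) := by
  have hν : ∀ᵐ z ∂ν', z.2 = 0 := ae_iff.2 (by simpa using hν')
  have hWp := Wp_map_toBase (q := q) hq.le hp hmom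
  refine ⟨hWp ▸ rpow_integral_le_Wp hq.le hp hmom hν, fun heq => ?_⟩
  exact (map_toBase_eq_of_Wp_eq hq hp hmom hν (heq.trans hWp)).symm
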